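/- For discrete distributions P and Q on a finite alphabet X, the Chernoff information C(P,Q) = -min_{λ∈[0,1]} log(Σ_x P(x)^λ Q(x)^{1-λ}) satisfies C(P,Q) ≥ -(1/2)·ln(1 - V(P,Q)²), where V(P,Q) = (1/2)Σ_x |P(x)-Q(x)| is the total variation distance. -/

import Mathlib

/-!
At `λ = 1/2` the sum in the Chernoff information is the Bhattacharyya coefficient
`B = ∑ √(P x) √(Q x) = ∑ √(min) √(max)`. Since `∑ min (P x) (Q x) = 1 - V` and
`∑ max (P x) (Q x) = 1 + V`, Cauchy–Schwarz gives `B ≤ √(1 - V²)`. The infimum over `λ` is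
at most its value at `1/2`, and `logb 2 B ≤ log B` because `B ≤ 1`.
-/

open Finset

/-- Chernoff information with base-2 logarithm. -/
noncomputable def chernoff {α : Type*} [Fintype α] (P Q : α → ℝ) : ℝ :=
  - sInf ((fun l : ℝ => Real.logb 2 (∑ x, P x ^ l * Q x ^ (1 - l))) '' Set.Icc (0:ℝ) 1)

/-- Total variation distance. -/
noncomputable def tv {α : Type*} [Fintype α] (P Q : α → ℝ) : ℝ :=
  (1/2) * ∑ x, |P x - Q x|

theorem Real.logb_two_le_log {y : ℝ} (hy0 : 0 ≤ y) (hy1 : y ≤ 1) :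
    Real.logb 2 y ≤ Real.log y := by
  have hlog : Real.log y ≤ 0 := Real.log_nonpos hy0 hy1
  have hlog2 : 0 < Real.log 2 := Real.log_pos one_lt_two
  have hlog2_le : Real.log 2 ≤ 1 := by linarith [Real.log_two_lt_d9]
  rw [Real.logb, div_le_iff₀ hlog2]
  nlinarith

theorem Real.min_le_rpow_mul_rpow {a b l : ℝ} (ha : 0 ≤ a) (hb : 0 ≤ b) (hl0 : 0 ≤ l)
    (hl1 : l ≤ 1) : min a b ≤ a ^ l * b ^ (1 - l) := by
  rcases (le_min ha hb).eq_or_lt with hm | hm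
  · rw [← hm]
    positivity
  calc min a b = min a b ^ l * min a b ^ (1 - l) := by rw [← Real.rpow_add hm]; norm_num
    _ ≤ a ^ l * b ^ (1 - l) := by
      gcongr
      exacts [min_le_left _ _, min_le_right _ _]

section Distributions

variable {α : Type*} [Fintype α] {P Q : α → ℝ}

theorem sum_min_add_sum_max (hP1 : ∑ x, P x = 1) (hQ1 : ∑ x, Q x = 1) :
    ∑ x, min (P x) (Q x) + ∑ x, max (P x) (Q x) = 2 := by
  rw [← sum_add_distrib]
  simp only [min_add_max]
  rw [sum_add_distrib, hP1, hQ1]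
  norm_num

theorem sum_max_sub_sum_min :
    ∑ x, max (P x) (Q x) - ∑ x, min (P x) (Q x) = 2 * tv P Q := by
  rw [← sum_sub_distrib]
  simp only [max_sub_min_eq_abs', tv]
  ring

theorem sum_min_eq_one_sub_tv (hP1 : ∑ x, P x = 1) (hQ1 : ∑ x, Q x = 1) :
    ∑ x, min (P x) (Q x) = 1 - tv P Q := by
  linarith [sum_min_add_sum_max hP1 hQ1, sum_max_sub_sum_min (P := P) (Q := Q)]

theorem sum_max_eq_one_add_tv (hP1 : ∑ x, P x = 1) (hQ1 : ∑ x, Q x = 1) :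
    ∑ x, max (P x) (Q x) = 1 + tv P Q := by
  linarith [sum_min_add_sum_max hP1 hQ1, sum_max_sub_sum_min (P := P) (Q := Q)]

theorem tv_le_one (hP0 : ∀ x, 0 ≤ P x) (hP1 : ∑ x, P x = 1)
    (hQ0 : ∀ x, 0 ≤ Q x) (hQ1 : ∑ x, Q x = 1) : tv P Q ≤ 1 := by
  have : 0 ≤ ∑ x, min (P x) (Q x) := sum_nonneg fun x _ => le_min (hP0 x) (hQ0 x)
  linarith [sum_min_eq_one_sub_tv hP1 hQ1]

theorem one_sub_tv_le_sum_rpow_mul_rpow (hP0 : ∀ x, 0 ≤ P x) (hP1 : ∑ x, P x = 1)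
    (hQ0 : ∀ x, 0 ≤ Q x) (hQ1 : ∑ x, Q x = 1) {l : ℝ} (hl : l ∈ Set.Icc (0 : ℝ) 1) :
    1 - tv P Q ≤ ∑ x, P x ^ l * Q x ^ (1 - l) := by
  rw [← sum_min_eq_one_sub_tv hP1 hQ1]
  exact sum_le_sum fun x _ => Real.min_le_rpow_mul_rpow (hP0 x) (hQ0 x) hl.1 hl.2

theorem sum_rpow_mul_rpow_le_one (hP0 : ∀ x, 0 ≤ P x) (hP1 : ∑ x, P x = 1)
    (hQ0 : ∀ x, 0 ≤ Q x) (hQ1 : ∑ x, Q x = 1) {l : ℝ} (hl : l ∈ Set.Icc (0 : ℝ) 1) :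
    ∑ x, P x ^ l * Q x ^ (1 - l) ≤ 1 :=
  calc ∑ x, P x ^ l * Q x ^ (1 - l) ≤ ∑ x, (l * P x + (1 - l) * Q x) :=
        sum_le_sum fun x _ => Real.geom_mean_le_arith_mean2_weighted hl.1 (by linarith [hl.2])
          (hP0 x) (hQ0 x) (by ring)
    _ = 1 := by rw [sum_add_distrib, ← mul_sum, ← mul_sum, hP1, hQ1]; ring

theorem sum_sqrt_mul_sqrt_le_sqrt_one_sub_tv_sq (hP0 : ∀ x, 0 ≤ P x) (hP1 : ∑ x, P x = 1)
    (hQ0 : ∀ x, 0 ≤ Q x) (hQ1 : ∑ x, Q x = 1) :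
    ∑ x, √(P x) * √(Q x) ≤ √(1 - tv P Q ^ 2) := by
  have hterm (x : α) : √(P x) * √(Q x) = √(min (P x) (Q x)) * √(max (P x) (Q x)) := by
    rw [← Real.sqrt_mul (hP0 x), ← Real.sqrt_mul (le_min (hP0 x) (hQ0 x)), min_mul_max]
  calc ∑ x, √(P x) * √(Q x) = ∑ x, √(min (P x) (Q x)) * √(max (P x) (Q x)) := by
        simp only [hterm]
    _ ≤ √(∑ x, min (P x) (Q x)) * √(∑ x, max (P x) (Q x)) :=
        Real.sum_sqrt_mul_sqrt_le _ (fun x => le_min (hP0 x) (hQ0 x))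
          (fun x => (hP0 x).trans (le_max_left _ _))
    _ = √(1 - tv P Q ^ 2) := by
        rw [sum_min_eq_one_sub_tv hP1 hQ1, sum_max_eq_one_add_tv hP1 hQ1,
          ← Real.sqrt_mul (by linarith [tv_le_one hP0 hP1 hQ0 hQ1])]
        ring_nf

end Distributions

theorem stmt0 {α : Type*} [Fintype α] (P Q : α → ℝ)
    (hP0 : ∀ x, 0 ≤ P x) (hP1 : ∑ x, P x = 1)
    (hQ0 : ∀ x, 0 ≤ Q x) (hQ1 : ∑ x, Q x = 1) :
    chernoff P Q ≥ -(1/2) * Real.log (1 - tv P Q ^ 2) := by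
  set f : ℝ → ℝ := fun l => Real.logb 2 (∑ x, P x ^ l * Q x ^ (1 - l))
  rw [chernoff, ge_iff_le, neg_mul, neg_le_neg_iff]
  rcases (tv_le_one hP0 hP1 hQ0 hQ1).eq_or_lt with hV | hV
  · -- `log 0 = 0`, so the right-hand side vanishes when `tv P Q = 1`
    rw [hV, one_pow, sub_self, Real.log_zero, mul_zero]
    refine Real.sInf_nonpos ?_
    rintro _ ⟨l, hl, rfl⟩
    exact Real.logb_nonpos one_lt_two
      (sum_nonneg fun x _ => mul_nonneg (Real.rpow_nonneg (hP0 x) _) (Real.rpow_nonneg (hQ0 x) _))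
      (sum_rpow_mul_rpow_le_one hP0 hP1 hQ0 hQ1 hl)
  set B := ∑ x, √(P x) * √(Q x)
  have hB : ∑ x, P x ^ (1/2 : ℝ) * Q x ^ (1 - 1/2 : ℝ) = B := by
    norm_num [B, Real.sqrt_eq_rpow]
  have hBpos : 0 < B := (sub_pos.mpr hV).trans_le
    (hB ▸ one_sub_tv_le_sum_rpow_mul_rpow hP0 hP1 hQ0 hQ1 (by norm_num))
  have hBle := sum_sqrt_mul_sqrt_le_sqrt_one_sub_tv_sq hP0 hP1 hQ0 hQ1
  have hbound_pos : 0 < 1 - tv P Q ^ 2 := Real.sqrt_pos.mp (hBpos.trans_le hBle)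
  have hbdd : BddBelow (f '' Set.Icc 0 1) := by
    refine ⟨Real.logb 2 (1 - tv P Q), ?_⟩
    rintro _ ⟨l, hl, rfl⟩
    exact Real.logb_le_logb_of_le one_lt_two (by linarith)
      (one_sub_tv_le_sum_rpow_mul_rpow hP0 hP1 hQ0 hQ1 hl)
  calc sInf (f '' Set.Icc 0 1) ≤ Real.logb 2 B :=
        hB ▸ csInf_le hbdd ⟨1/2, by norm_num, rfl⟩
    _ ≤ Real.log B := Real.logb_two_le_log hBpos.le
        (hBle.trans (Real.sqrt_le_one.mpr (sub_le_self _ (sq_nonneg _))))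
    _ ≤ Real.log √(1 - tv P Q ^ 2) := Real.log_le_log hBpos hBle
    _ = 1/2 * Real.log (1 - tv P Q ^ 2) := by
        rw [Real.log_sqrt hbound_pos.le]; ring
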